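/- arXiv:1804.05513 — 3 statements merged into one kernel-verified Lean document; each statement's English description precedes it below -/
import Mathlib

section
/- Every vector x ∈ [0,1]ⁿ with ‖x‖₁ an integer is a convex combination of binary vectors y ∈ {0,1}ⁿ each satisfying ‖y‖₁ = ‖x‖₁. -/
/-!
If `x ∈ [0,1]ⁿ` has integral coordinate sum, it has either no fractional coordinate or at least
two, say `i ≠ j`. Moving mass between `x i` and `x j` along the line `x + t (e_j - e_i)`, in either
direction until one of the two coordinates reaches `0` or `1`, gives two vectors of the cube with
the same sum and strictly fewer fractional coordinates, and `x` lies on the segment between them.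
Induction on the set of fractional coordinates puts `x` in the convex hull of the binary vectors
with the same sum.
-/

open Finset

theorem Convex.mem_of_add_smul_mem_of_sub_smul_mem {E : Type*} [AddCommGroup E] [Module ℝ E]
    {C : Set E} (hC : Convex ℝ C) {x d : E} {s t : ℝ} (hs : 0 < s) (ht : 0 < t)
    (hplus : x + s • d ∈ C) (hminus : x - t • d ∈ C) : x ∈ C := by
  have hst : s + t ≠ 0 := by positivity
  convert hC hplus hminus (a := t / (s + t)) (b := s / (s + t)) (by positivity) (by positivity)
    (by rw [← add_div, add_comm, div_self hst]) using 1
  match_scalars <;> field_simp <;> ring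

theorem exists_fin_of_mem_convexHull {E : Type*} [AddCommGroup E] [Module ℝ E] {S : Set E}
    {x : E} (hx : x ∈ convexHull ℝ S) :
    ∃ (N : ℕ) (α : Fin N → ℝ) (y : Fin N → E),
      (∀ j, 0 ≤ α j) ∧ ∑ j, α j = 1 ∧ (∀ j, y j ∈ S) ∧ ∑ j, α j • y j = x := by
  obtain ⟨ι, _, w, z, hw₀, hw₁, hz, rfl⟩ := mem_convexHull_iff_exists_fintype.mp hx
  let e := (Fintype.equivFin ι).symm
  exact ⟨_, w ∘ e, z ∘ e, fun _ => hw₀ _,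
    by simpa [Function.comp_def] using (e.sum_comp w).trans hw₁, fun _ => hz _,
    e.sum_comp fun i => w i • z i⟩

def binaryVectorsWithSum (ι : Type*) [Fintype ι] (m : ℝ) : Set (ι → ℝ) :=
  {y | (∀ i, y i = 0 ∨ y i = 1) ∧ ∑ i, y i = m}

section BinaryDecomposition

variable {ι : Type*} {x : ι → ℝ}

lemma exists_int_sum_eq_of_binary (s : Finset ι) (h : ∀ i ∈ s, x i = 0 ∨ x i = 1) :
    ∃ c : ℤ, ∑ i ∈ s, x i = c := by
  classical
  refine ⟨#{i ∈ s | x i = 1}, ?_⟩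
  rw [Int.cast_natCast, ← sum_boole]
  refine sum_congr rfl fun i hi => ?_
  rcases h i hi with h | h <;> simp [h]

noncomputable def fractionalCoords [Fintype ι] (x : ι → ℝ) : Finset ι :=
  univ.filter fun i => 0 < x i ∧ x i < 1

lemma mem_fractionalCoords [Fintype ι] {i : ι} :
    i ∈ fractionalCoords x ↔ 0 < x i ∧ x i < 1 := by
  simp [fractionalCoords]

lemma eq_zero_or_eq_one_of_notMem_fractionalCoords [Fintype ι] {i : ι}
    (hx : x i ∈ Set.Icc (0 : ℝ) 1) (hi : i ∉ fractionalCoords x) : x i = 0 ∨ x i = 1 := by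
  rw [mem_fractionalCoords] at hi
  obtain ⟨h0, h1⟩ := hx
  by_contra! h
  exact hi ⟨h0.lt_of_ne' h.1, h1.lt_of_ne h.2⟩

lemma exists_ne_mem_fractionalCoords [Fintype ι] (hx : ∀ i, x i ∈ Set.Icc (0 : ℝ) 1)
    (hint : ∃ m : ℤ, ∑ i, x i = m) {i : ι} (hi : i ∈ fractionalCoords x) :
    ∃ j ∈ fractionalCoords x, j ≠ i := by
  classical
  by_contra! h
  obtain ⟨m, hm⟩ := hint
  obtain ⟨c, hc⟩ := exists_int_sum_eq_of_binary (univ.erase i) fun j hj =>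
    eq_zero_or_eq_one_of_notMem_fractionalCoords (hx j) fun hj' => ne_of_mem_erase hj (h j hj')
  have hxi : x i = ((m - c : ℤ) : ℝ) := by
    rw [← sum_erase_add _ _ (mem_univ i), hc] at hm
    push_cast
    linarith
  rw [mem_fractionalCoords, hxi] at hi
  obtain ⟨h0, h1⟩ := hi
  norm_cast at h0 h1
  omega

/-- Move mass from coordinate `i` to coordinate `j` until one of them reaches `0` or `1`. -/
noncomputable def transfer [DecidableEq ι] (x : ι → ℝ) (i j : ι) : ι → ℝ :=
  x + min (x i) (1 - x j) • (Pi.single j 1 - Pi.single i 1)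

lemma transfer_apply_of_ne [DecidableEq ι] {i j t : ι} (hi : t ≠ i) (hj : t ≠ j) :
    transfer x i j t = x t := by
  simp [transfer, hi, hj]

lemma transfer_apply_left [DecidableEq ι] {i j : ι} (hij : i ≠ j) :
    transfer x i j i = x i - min (x i) (1 - x j) := by
  simp [transfer, hij, sub_eq_add_neg]

lemma transfer_apply_right [DecidableEq ι] {i j : ι} (hij : i ≠ j) :
    transfer x i j j = x j + min (x i) (1 - x j) := by
  simp [transfer, hij.symm]

lemma transfer_swap [DecidableEq ι] (i j : ι) :
    transfer x j i = x - min (x j) (1 - x i) • (Pi.single j 1 - Pi.single i 1) := by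
  rw [transfer, ← neg_sub (Pi.single j _), smul_neg, ← sub_eq_add_neg]

lemma sum_transfer [Fintype ι] [DecidableEq ι] (i j : ι) :
    ∑ t, transfer x i j t = ∑ t, x t := by
  simp [transfer, sum_add_distrib, ← mul_sum, sum_sub_distrib]

lemma transfer_mem_Icc [DecidableEq ι] (hx : ∀ t, x t ∈ Set.Icc (0 : ℝ) 1) {i j : ι}
    (hij : i ≠ j) (t : ι) : transfer x i j t ∈ Set.Icc (0 : ℝ) 1 := by
  have hδi := min_le_left (x i) (1 - x j)
  have hδj := min_le_right (x i) (1 - x j)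
  have hδ : 0 ≤ min (x i) (1 - x j) := le_min (hx i).1 (by linarith [(hx j).2])
  by_cases hti : t = i
  · subst hti
    rw [transfer_apply_left hij]
    constructor <;> linarith [(hx t).2]
  by_cases htj : t = j
  · subst htj
    rw [transfer_apply_right hij]
    constructor <;> linarith [(hx t).1]
  rw [transfer_apply_of_ne hti htj]
  exact hx t

lemma fractionalCoords_transfer_ssubset [Fintype ι] [DecidableEq ι] {i j : ι} (hij : i ≠ j)
    (hi : i ∈ fractionalCoords x) (hj : j ∈ fractionalCoords x) :
    fractionalCoords (transfer x i j) ⊂ fractionalCoords x := by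
  have hsub : fractionalCoords (transfer x i j) ⊆ fractionalCoords x := by
    intro t ht
    by_cases hti : t = i
    · exact hti ▸ hi
    by_cases htj : t = j
    · exact htj ▸ hj
    rwa [mem_fractionalCoords, ← transfer_apply_of_ne (x := x) hti htj, ← mem_fractionalCoords]
  rw [ssubset_iff_of_subset hsub]
  rcases min_choice (x i) (1 - x j) with h | h
  · refine ⟨i, hi, fun hi' => ?_⟩
    rw [mem_fractionalCoords, transfer_apply_left hij, h, sub_self] at hi'
    exact hi'.1.false
  · refine ⟨j, hj, fun hj' => ?_⟩
    rw [mem_fractionalCoords, transfer_apply_right hij, h, add_sub_cancel] at hj'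
    exact hj'.2.false

lemma min_pos_of_mem_fractionalCoords [Fintype ι] {i j : ι} (hi : i ∈ fractionalCoords x)
    (hj : j ∈ fractionalCoords x) : 0 < min (x i) (1 - x j) := by
  rw [mem_fractionalCoords] at hi hj
  exact lt_min hi.1 (by linarith [hj.2])

theorem mem_convexHull_binaryVectorsWithSum [Fintype ι] (hx : ∀ i, x i ∈ Set.Icc (0 : ℝ) 1)
    (hint : ∃ m : ℤ, ∑ i, x i = m) :
    x ∈ convexHull ℝ (binaryVectorsWithSum ι (∑ i, x i)) := by
  classical
  induction hs : fractionalCoords x using Finset.strongInduction generalizing x with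
  | _ s ih =>
  obtain rfl | ⟨i, hi⟩ := s.eq_empty_or_nonempty
  · refine subset_convexHull ℝ _ ⟨fun i => ?_, rfl⟩
    exact eq_zero_or_eq_one_of_notMem_fractionalCoords (hx i) (by simp [hs])
  rw [← hs] at hi
  obtain ⟨j, hj, hji⟩ := exists_ne_mem_fractionalCoords hx hint hi
  have transfer_mem : ∀ {i j}, i ≠ j → i ∈ fractionalCoords x → j ∈ fractionalCoords x →
      transfer x i j ∈ convexHull ℝ (binaryVectorsWithSum ι (∑ i, x i)) := by
    intro i j hij hi hj
    rw [← sum_transfer (x := x) i j]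
    exact ih _ (hs ▸ fractionalCoords_transfer_ssubset hij hi hj) (transfer_mem_Icc hx hij)
      (by rwa [sum_transfer]) rfl
  refine (convex_convexHull ℝ _).mem_of_add_smul_mem_of_sub_smul_mem
    (min_pos_of_mem_fractionalCoords hi hj) (min_pos_of_mem_fractionalCoords hj hi) (transfer_mem hji.symm hi hj) ?_
  rw [← transfer_swap]
  exact transfer_mem hji hj hi

end BinaryDecomposition

theorem stmt3 (n : ℕ) (x : Fin n → ℝ)
    (hx : ∀ i, x i ∈ Set.Icc (0 : ℝ) 1)
    (hint : ∃ m : ℕ, ∑ i, x i = m) :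
    ∃ (N : ℕ) (α : Fin N → ℝ) (y : Fin N → Fin n → ℝ),
      (∀ j, 0 ≤ α j) ∧ (∑ j, α j = 1) ∧
      (∀ j i, y j i = 0 ∨ y j i = 1) ∧
      (∀ j, ∑ i, y j i = ∑ i, x i) ∧
      (∀ i, x i = ∑ j, α j * y j i) := by
  obtain ⟨m, hm⟩ := hint
  obtain ⟨N, α, y, hα, hα_sum, hy, hxy⟩ := exists_fin_of_mem_convexHull
    (mem_convexHull_binaryVectorsWithSum hx ⟨m, by rw [hm, Int.cast_natCast]⟩)
  refine ⟨N, α, y, hα, hα_sum, fun j => (hy j).1, fun j => (hy j).2, fun i => ?_⟩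
  rw [← hxy]
  simp only [Finset.sum_apply, Pi.smul_apply, smul_eq_mul]
end

section
/- Define t: ℕ → ℕ by t(1) = 2^200 and t(i+1) = 2^(t(i)/e(i)) for i ≥ 1, where e(i) = 2^(i+10). Then for every i ≥ 2, t(i) ≥ e(i)·t(i-1); in particular t(i) ≥ 4·t(i-1) and t is strictly increasing. -/
/-!
Every `t(i)` with `i ≥ 1` is a power of two, `t(i) = 2 ^ L(i)` with `L = tfunLog`, and since
`e(i)` is a power of two too, the recursion becomes `L(i+1) = 2 ^ (L(i) - (i+10))` as long as
`i + 10 ≤ L(i)`. The claim `e(i+1) t(i) ≤ t(i+1)` is then `L(i) + (i+11) ≤ L(i+1)`, which follows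
from `b + a < 2 ^ (b - a)` for `3a < b`; the invariant `3(i+10) < L(i)` propagates along the same
inequality.
-/

/-- `e(i) = 2^(i+10)`. -/
def efun (i : ℕ) : ℕ := 2 ^ (i + 10)

/-- `t(1) = 2^200` and `t(i+1) = 2^(t(i)/e(i))` for `i ≥ 1`. -/
def tfun : ℕ → ℕ
  | 0 => 0
  | 1 => 2 ^ 200
  | (i + 2) => 2 ^ (tfun (i + 1) / efun (i + 1))

def tfunLog : ℕ → ℕ
  | 0 => 0
  | 1 => 200
  | (i + 2) => 2 ^ (tfunLog (i + 1) - (i + 11))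

lemma two_mul_le_two_pow (k : ℕ) : 2 * k ≤ 2 ^ k := by
  cases k with
  | zero => simp
  | succ k =>
    rw [pow_succ, mul_comm (2 ^ k)]
    exact Nat.mul_le_mul_left 2 Nat.lt_two_pow_self

lemma add_lt_two_pow_sub {a b : ℕ} (h : 3 * a < b) : b + a < 2 ^ (b - a) := by
  calc b + a = (b - a) + 2 * a := by omega
    _ < 2 * (b - a) := by omega
    _ ≤ 2 ^ (b - a) := two_mul_le_two_pow _

lemma three_mul_lt_tfunLog (i : ℕ) : 3 * (i + 11) < tfunLog (i + 1) := by
  induction i with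
  | zero => simp [tfunLog]
  | succ i ih =>
    have step := add_lt_two_pow_sub ih
    change _ < 2 ^ (tfunLog (i + 1) - (i + 11))
    omega

lemma tfunLog_add_lt (i : ℕ) : tfunLog (i + 1) + (i + 11) < tfunLog (i + 2) :=
  add_lt_two_pow_sub (three_mul_lt_tfunLog i)

lemma tfun_eq_two_pow_tfunLog (i : ℕ) : tfun (i + 1) = 2 ^ tfunLog (i + 1) := by
  induction i with
  | zero => rfl
  | succ i ih =>
    have hle : i + 11 ≤ tfunLog (i + 1) := by linarith [three_mul_lt_tfunLog i]
    change 2 ^ (tfun (i + 1) / 2 ^ (i + 11)) = 2 ^ 2 ^ (tfunLog (i + 1) - (i + 11))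
    rw [ih, Nat.pow_div hle two_pos]

lemma efun_mul_tfun_le (i : ℕ) : efun (i + 2) * tfun (i + 1) ≤ tfun (i + 2) := by
  rw [tfun_eq_two_pow_tfunLog, tfun_eq_two_pow_tfunLog, efun, ← pow_add]
  exact Nat.pow_le_pow_right two_pos (by linarith [tfunLog_add_lt i])

lemma four_mul_tfun_le (i : ℕ) : 4 * tfun (i + 1) ≤ tfun (i + 2) :=
  calc 4 * tfun (i + 1) ≤ efun (i + 2) * tfun (i + 1) :=
        Nat.mul_le_mul_right _ (Nat.pow_le_pow_right two_pos (by omega) : 2 ^ 2 ≤ 2 ^ (i + 12))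
    _ ≤ tfun (i + 2) := efun_mul_tfun_le i

lemma strictMono_tfun_succ : StrictMono fun i ↦ tfun (i + 1) := by
  refine strictMono_nat_of_lt_succ fun i ↦ ?_
  have hpos : 0 < tfun (i + 1) := by rw [tfun_eq_two_pow_tfunLog]; positivity
  linarith [four_mul_tfun_le i]

theorem stmt4 :
    (∀ i, 2 ≤ i → efun i * tfun (i - 1) ≤ tfun i) ∧
    (∀ i, 2 ≤ i → 4 * tfun (i - 1) ≤ tfun i) ∧
    (∀ i j, 1 ≤ i → i < j → tfun i < tfun j) := by
  refine ⟨fun i hi ↦ ?_, fun i hi ↦ ?_, fun i j hi hij ↦ ?_⟩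
  · obtain ⟨k, rfl⟩ := Nat.exists_eq_add_of_le' hi
    exact efun_mul_tfun_le k
  · obtain ⟨k, rfl⟩ := Nat.exists_eq_add_of_le' hi
    exact four_mul_tfun_le k
  · obtain ⟨k, rfl⟩ := Nat.exists_eq_add_of_le' hi
    obtain ⟨l, rfl⟩ := Nat.exists_eq_add_of_le' (hi.trans hij.le)
    exact strictMono_tfun_succ (by omega : k < l)
end

section
/- Let G be a bipartite graph on classes (A, B) and let G' be obtained from G by adding or removing at most γ·|A||B| edge slots, where γ ≤ d_G(A,B)·δ²/4. If G is ⟨δ⟩-regular with the stronger conclusion d_G(A',B') ≥ (3/4)d_G(A,B) for all A' ⊆ A, B' ⊆ B with |A'| ≥ δ|A|, |B'| ≥ δ|B|, then G' is ⟨δ⟩-regular. -/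
open Finset

/-!
Editing `G` into `G'` lowers `e(A', B')` by at most the number `m` of deleted edges and raises
`e(A, B)` by at most the number `p` of added ones. As `|A'||B'| ≥ δ²|A||B|`, the relative loss
`m / |A'||B'|` plus half the relative gain `p / |A||B|` is at most `γ / δ² ≤ d_G(A, B) / 4`:
exactly the gap between the assumed `3/4` and the required `1/2`.
-/

/-- Edge density of the bipartite graph with edge set `E` between `S` and `T`. -/
noncomputable def bidensity {α β : Type*} [DecidableEq α] [DecidableEq β]
    (E : Finset (α × β)) (S : Finset α) (T : Finset β) : ℝ :=
  ((E.filter (fun e => e.1 ∈ S ∧ e.2 ∈ T)).card : ℝ) / ((S.card : ℝ) * T.card)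

/-- `⟨δ⟩`-regularity of a bipartite graph with edge set `E` on vertex classes `(A, B)`. -/
def deltaRegular {α β : Type*} [DecidableEq α] [DecidableEq β]
    (δ : ℝ) (A : Finset α) (B : Finset β) (E : Finset (α × β)) : Prop :=
  ∀ A' ⊆ A, ∀ B' ⊆ B, δ * A.card ≤ A'.card → δ * B.card ≤ B'.card →
    (1/2) * bidensity E A B ≤ bidensity E A' B'

section Bidensity

variable {α β : Type*} [DecidableEq α] [DecidableEq β]

lemma bidensity_nonneg (E : Finset (α × β)) (S : Finset α) (T : Finset β) :
    0 ≤ bidensity E S T := by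
  unfold bidensity
  positivity

lemma bidensity_empty_left (E : Finset (α × β)) (T : Finset β) :
    bidensity E (∅ : Finset α) T = 0 := by
  simp [bidensity]

lemma card_mul_card_pos_of_bidensity_pos {E : Finset (α × β)} {S : Finset α} {T : Finset β}
    (h : 0 < bidensity E S T) : 0 < (#S : ℝ) * #T := by
  by_contra hST
  have hzero : (#S : ℝ) * #T = 0 := le_antisymm (not_lt.mp hST) (by positivity)
  simp [bidensity, hzero] at h

lemma bidensity_le_bidensity_add_card_sdiff (E F : Finset (α × β)) (S : Finset α)
    (T : Finset β) : bidensity E S T ≤ bidensity F S T + #(E \ F) / ((#S : ℝ) * #T) := by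
  set P : α × β → Prop := fun e => e.1 ∈ S ∧ e.2 ∈ T
  have hcount : #(E.filter P) ≤ #(F.filter P) + #(E \ F) :=
    calc #(E.filter P) ≤ #(E.filter P \ F.filter P) + #(F.filter P) :=
          card_le_card_sdiff_add_card
      _ ≤ #(E \ F) + #(F.filter P) := by
          refine Nat.add_le_add_right (card_le_card fun e he => ?_) _
          simp only [mem_sdiff, mem_filter] at he ⊢
          tauto
      _ = #(F.filter P) + #(E \ F) := add_comm _ _
  unfold bidensity
  rw [← add_div]
  gcongr
  exact_mod_cast hcount

end Bidensity

lemma div_add_div_le_of_edit_budget {x x' m p γ d δ : ℝ} (hx' : 0 < x') (hx'x : x' ≤ x)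
    (hp : 0 ≤ p) (hd : 0 ≤ d) (hmp : m + p ≤ γ * x) (hγ : γ ≤ d * δ ^ 2 / 4)
    (hδx : δ ^ 2 * x ≤ x') : m / x' + p / (2 * x) ≤ d / 4 := by
  have hx : 0 ≤ x := hx'.le.trans hx'x
  calc m / x' + p / (2 * x) ≤ m / x' + p / x' := by gcongr; linarith
    _ = (m + p) / x' := by ring
    _ ≤ d / 4 := by
      rw [div_le_iff₀ hx']
      calc m + p ≤ γ * x := hmp
        _ ≤ d * δ ^ 2 / 4 * x := by gcongr
        _ = d / 4 * (δ ^ 2 * x) := by ring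
        _ ≤ d / 4 * x' := by gcongr

theorem stmt13_general {α β : Type*} [DecidableEq α] [DecidableEq β]
    (δ γ : ℝ) (A : Finset α) (B : Finset β)
    (G G' : Finset (α × β))
    (hedit : (((G \ G') ∪ (G' \ G)).card : ℝ) ≤ γ * ((A.card : ℝ) * B.card))
    (hγ : γ ≤ bidensity G A B * δ^2 / 4)
    (hstrong : ∀ A' ⊆ A, ∀ B' ⊆ B, δ * A.card ≤ A'.card → δ * B.card ≤ B'.card →
      (3/4) * bidensity G A B ≤ bidensity G A' B') :
    deltaRegular δ A B G' := by
  intro A' hA' B' hB' hA'c hB'c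
  have hedit' : (#(G \ G') : ℝ) + #(G' \ G) ≤ γ * (#A * #B) := by
    rwa [card_union_of_disjoint disjoint_sdiff_sdiff, Nat.cast_add] at hedit
  have hgrow := bidensity_le_bidensity_add_card_sdiff G' G A B
  have hshrink := bidensity_le_bidensity_add_card_sdiff G G' A' B'
  rcases (bidensity_nonneg G A B).eq_or_lt with hd | hd
  · have hγ0 : γ * (#A * #B) ≤ 0 :=
      mul_nonpos_of_nonpos_of_nonneg (by simpa [← hd] using hγ) (by positivity)
    have hp : (#(G' \ G) : ℝ) / (#A * #B) ≤ 0 :=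
      div_nonpos_of_nonpos_of_nonneg (by linarith [(#(G \ G')).cast_nonneg (α := ℝ)])
        (by positivity)
    linarith [bidensity_nonneg G' A' B']
  have hδ : 0 ≤ δ := by
    by_contra! hδ
    have := hstrong ∅ (empty_subset _) ∅ (empty_subset _) (by simp; nlinarith) (by simp; nlinarith)
    linarith [bidensity_empty_left G (∅ : Finset β)]
  have ha'b' := card_mul_card_pos_of_bidensity_pos
    (by linarith [hstrong A' hA' B' hB' hA'c hB'c] : 0 < bidensity G A' B')
  have hsub : (#A' : ℝ) * #B' ≤ #A * #B := by gcongr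
  have hsize : δ ^ 2 * (#A * #B) ≤ #A' * #B' := by
    calc δ ^ 2 * (#A * #B) = (δ * #A) * (δ * #B) := by ring
      _ ≤ #A' * #B' := by gcongr
  have hbudget := div_add_div_le_of_edit_budget ha'b' hsub (by positivity) hd.le hedit' hγ hsize
  have hhalf : (#(G' \ G) : ℝ) / (2 * (#A * #B)) = (#(G' \ G) : ℝ) / (#A * #B) / 2 := by ring
  linarith [hstrong A' hA' B' hB' hA'c hB'c]

theorem stmt13 {α β : Type*} [DecidableEq α] [DecidableEq β]
    (δ γ : ℝ) (A : Finset α) (B : Finset β)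
    (G G' : Finset (α × β)) (hG : G ⊆ A ×ˢ B) (hG' : G' ⊆ A ×ˢ B)
    (hedit : (((G \ G') ∪ (G' \ G)).card : ℝ) ≤ γ * ((A.card : ℝ) * B.card))
    (hγ : γ ≤ bidensity G A B * δ^2 / 4)
    (hstrong : ∀ A' ⊆ A, ∀ B' ⊆ B, δ * A.card ≤ A'.card → δ * B.card ≤ B'.card →
      (3/4) * bidensity G A B ≤ bidensity G A' B') :
    deltaRegular δ A B G' :=
  stmt13_general δ γ A B G G' hedit hγ hstrong
end
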